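/- arXiv:0808.2008 — 2 statements merged into one kernel-verified Lean document; each statement's English description precedes it below -/
import Mathlib

section
/- Let (V, λ) be an alternating bilinear form over a commutative ring R (λ(x,x) = 0 for all x) and let u, v ∈ V satisfy λ(u,v) = 0, and let a ∈ R. Then the symplectic transvection τ(x) = x + u·λ(v,x) + v·λ(u,x) + u·a·λ(u,x) is an isometry of (V, λ). Moreover, for u fixed and v, v' with λ(u,v) = λ(u,v') = 0 and a, a' ∈ R, the composition satisfies τ_{u,a',v'} ∘ τ_{u,a,v} = τ_{u, a' + λ(v',v) + a, v + v'}. -/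
/-- The symplectic transvection `τ_{u,a,v}` for an alternating bilinear form. -/
def sympTransvection {R : Type*} [CommRing R] {V : Type*} [AddCommGroup V] [Module R V]
    (l : V →ₗ[R] V →ₗ[R] R) (u : V) (a : R) (v : V) (x : V) : V :=
  x + l v x • u + l u x • v + (a * l u x) • u

/-!
Write `τ x = x + φ x` with `φ x = λ(v,x) u + λ(u,x) (v + a u)`. Since `u` and `v + a u` span a
`λ`-isotropic plane, `λ(φ x, φ y) = 0`, and the cross terms `λ(x, φ y) + λ(φ x, y)` cancel by
skew-symmetry. Since `λ(u, τ x) = λ(u, x)`, the second transvection sees the same coefficient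
`λ(u, x)`, and `λ(v', τ x) = λ(v', x) + λ(u, x) λ(v', v)` produces the extra term in the parameter.
-/

section

variable {R V : Type*} [CommRing R] [AddCommGroup V] [Module R V] {l : V →ₗ[R] V →ₗ[R] R}
  {u v : V} {a : R}

theorem apply_sympTransvection (w x : V) :
    l w (sympTransvection l u a v x) = l w x + l v x * l w u + l u x * l w v + a * l u x * l w u := by
  simp only [sympTransvection, map_add, map_smul, smul_eq_mul]

theorem apply_sympTransvection_of_apply_eq_zero {w : V} (hwu : l w u = 0) (x : V) :
    l w (sympTransvection l u a v x) = l w x + l u x * l w v := by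
  rw [apply_sympTransvection, hwu]
  ring

theorem sympTransvection_comp {v' : V} {a' : R} (huu : l u u = 0) (huv : l u v = 0)
    (hv'u : l v' u = 0) (x : V) :
    sympTransvection l u a' v' (sympTransvection l u a v x)
      = sympTransvection l u (a' + l v' v + a) (v + v') x := by
  have hu : l u (sympTransvection l u a v x) = l u x := by
    rw [apply_sympTransvection_of_apply_eq_zero huu, huv, mul_zero, add_zero]
  have hv' : l v' (sympTransvection l u a v x) = l v' x + l u x * l v' v :=
    apply_sympTransvection_of_apply_eq_zero hv'u x
  rw [sympTransvection, hu, hv']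
  simp only [sympTransvection, map_add, LinearMap.add_apply]
  module

theorem LinearMap.IsAlt.sympTransvection_isometry (hl : l.IsAlt) (huv : l u v = 0) (x y : V) :
    l (sympTransvection l u a v x) (sympTransvection l u a v y) = l x y := by
  have hvu : l v u = 0 := hl.eq_iff.mp huv
  simp only [sympTransvection, map_add, map_smul, LinearMap.add_apply, LinearMap.smul_apply,
    smul_eq_mul, hl.self_eq_zero, huv, hvu]
  rw [← hl.neg x v, ← hl.neg x u]
  ring

end

/-- Symplectic transvections are isometries, and they compose by the rule
`τ_{u,a',v'} ∘ τ_{u,a,v} = τ_{u, a' + λ(v',v) + a, v + v'}`. -/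
theorem sympTransvection_isometry_and_comp
    (R : Type*) [CommRing R] (V : Type*) [AddCommGroup V] [Module R V]
    (l : V →ₗ[R] V →ₗ[R] R) (halt : ∀ x : V, l x x = 0)
    (u v v' : V) (a a' : R) (huv : l u v = 0) (huv' : l u v' = 0) :
    (∀ x y : V, l (sympTransvection l u a v x) (sympTransvection l u a v y) = l x y) ∧
    (∀ x : V, sympTransvection l u a' v' (sympTransvection l u a v x)
        = sympTransvection l u (a' + l v' v + a) (v + v') x) := by
  have hl : l.IsAlt := halt
  exact ⟨hl.sympTransvection_isometry huv,
    sympTransvection_comp (hl u) huv (hl.eq_iff.mp huv')⟩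
end

section
/- Let n = p₁^{m₁}⋯p_k^{m_k} be a product of powers of k distinct odd primes with each mᵢ ≥ 1. Then the group G = {u ∈ (ℤ/2nℤ)ˣ : u² ≡ 1 mod 4n} is isomorphic to (ℤ/2ℤ)^k, and the quotient of G by the subgroup {±1} is isomorphic to (ℤ/2ℤ)^{k−1}. -/
/-!
As `n` is odd, every unit `u` of `ℤ/2n` is odd, so `4 ∣ u² - 1` and the condition
`4n ∣ u² - 1` says just `u² = 1` in `ℤ/2n`: `G` is the 2-torsion of
`(ℤ/2n)ˣ ≅ (ℤ/n)ˣ ≅ ∏ᵢ (ℤ/pᵢ^mᵢ)ˣ`. Each factor is cyclic of even order `φ(pᵢ^mᵢ)`, so it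
has exactly two square roots of `1`, and `G` is an elementary abelian 2-group of order `2^k`,
i.e. an `𝔽₂`-vector space of dimension `k`. Since `2n > 2`, `{±1}` has order 2 and the
quotient has order `2^(k-1)`.
-/

open Module in
theorem CommGroup.nonempty_mulEquiv_fin_fun_multiplicative_zmod_two {A : Type*} [CommGroup A]
    [Finite A] {j : ℕ} (hcard : Nat.card A = 2 ^ j) (hexp : ∀ a : A, a ^ 2 = 1) :
    Nonempty (A ≃* (Fin j → Multiplicative (ZMod 2))) := by
  let : Module (ZMod 2) (Additive A) := AddCommGroup.zmodModule fun x =>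
    Additive.toMul.injective (by simpa [two_nsmul, ← pow_two] using hexp x.toMul)
  have hrank : finrank (ZMod 2) (Additive A) = finrank (ZMod 2) (Fin j → ZMod 2) := by
    have hcard' : Nat.card (Additive A) = 2 ^ finrank (ZMod 2) (Additive A) := by
      rw [natCard_eq_pow_finrank (K := ZMod 2), Nat.card_zmod]
    rw [finrank_fin_fun]
    exact Nat.pow_right_injective le_rfl (hcard'.symm.trans hcard)
  obtain ⟨e⟩ := FiniteDimensional.nonempty_linearEquiv_of_finrank_eq hrank
  exact ⟨(MulEquiv.multiplicativeAdditive A).symm.trans <|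
    (AddEquiv.toMultiplicative e.toAddEquiv).trans (MulEquiv.funMultiplicative _ _)⟩

theorem QuotientGroup.nonempty_mulEquiv_fin_fun_multiplicative_zmod_two {A : Type*} [CommGroup A]
    [Finite A] {j : ℕ} (hcard : Nat.card A = 2 ^ (j + 1)) (hexp : ∀ a : A, a ^ 2 = 1)
    (H : Subgroup A) (hH : Nat.card H = 2) :
    Nonempty (A ⧸ H ≃* (Fin j → Multiplicative (ZMod 2))) := by
  refine CommGroup.nonempty_mulEquiv_fin_fun_multiplicative_zmod_two ?_ ?_
  · have hlagrange := H.card_eq_card_quotient_mul_card_subgroup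
    rw [hcard, hH, pow_succ] at hlagrange
    exact (Nat.eq_of_mul_eq_mul_right two_pos hlagrange).symm
  · rintro ⟨a⟩
    exact congrArg _ (hexp a)

theorem Subgroup.card_eq_two_of_mem_iff {A : Type*} [Group A] (H : Subgroup A) {g : A}
    (hg : g ≠ 1) (hH : ∀ x, x ∈ H ↔ x = 1 ∨ x = g) : Nat.card H = 2 := by
  have : (H : Set A) = {1, g} := Set.ext hH
  rw [← SetLike.coe_sort_coe, this, Nat.card_coe_set_eq, Set.ncard_pair hg.symm]

theorem MulEquiv.card_ker_powMonoidHom_eq {A B : Type*} [CommGroup A] [CommGroup B]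
    (e : A ≃* B) (d : ℕ) :
    Nat.card (powMonoidHom d : A →* A).ker = Nat.card (powMonoidHom d : B →* B).ker :=
  Nat.card_congr <| e.toEquiv.subtypeEquiv fun a => by simp [← map_pow]

theorem Pi.card_ker_powMonoidHom {ι : Type*} [Fintype ι] (G : ι → Type*)
    [∀ i, CommGroup (G i)] (d : ℕ) :
    Nat.card (powMonoidHom d : (Π i, G i) →* Π i, G i).ker =
      ∏ i, Nat.card (powMonoidHom d : G i →* G i).ker := by
  rw [← Nat.card_pi]
  exact Nat.card_congr <| (Equiv.subtypeEquivRight fun x => by simp [funext_iff]).trans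
    Equiv.subtypePiEquivPi

theorem ZMod.card_ker_powMonoidHom_two_units_prime_pow {p m : ℕ} (hp : p.Prime) (hodd : Odd p)
    (hm : 1 ≤ m) : Nat.card (powMonoidHom 2 : (ZMod (p ^ m))ˣ →* (ZMod (p ^ m))ˣ).ker = 2 := by
  have hp2 : p ≠ 2 := hodd.ne_two_of_dvd_nat dvd_rfl
  have := isCyclic_units_of_prime_pow p hp hp2 m
  have : NeZero (p ^ m) := ⟨pow_ne_zero m hp.ne_zero⟩
  have h2p : 2 < p ^ m :=
    (hp.two_le.lt_of_ne' hp2).trans_le (Nat.le_self_pow (Nat.one_le_iff_ne_zero.mp hm) p)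
  rw [IsCyclic.card_powMonoidHom_ker, Nat.card_eq_fintype_card, ZMod.card_units_eq_totient]
  exact Nat.gcd_eq_right (Nat.totient_even h2p).two_dvd

theorem ZMod.card_ker_powMonoidHom_two_units {k : ℕ} {p m : Fin k → ℕ} (hp : ∀ i, (p i).Prime)
    (hodd : ∀ i, Odd (p i)) (hinj : Function.Injective p) (hm : ∀ i, 1 ≤ m i) :
    Nat.card (powMonoidHom 2 : (ZMod (∏ i, p i ^ m i))ˣ →* _).ker = 2 ^ k := by
  have hcop : Pairwise (Function.onFun Nat.Coprime fun i => p i ^ m i) := fun i j hij =>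
    ((Nat.coprime_primes (hp i) (hp j)).mpr (hinj.ne hij)).pow _ _
  rw [((Units.mapEquiv (ZMod.prodEquivPi _ hcop).toMulEquiv).trans
      MulEquiv.piUnits).card_ker_powMonoidHom_eq, Pi.card_ker_powMonoidHom,
    Finset.prod_congr rfl fun i _ =>
      ZMod.card_ker_powMonoidHom_two_units_prime_pow (hp i) (hodd i) (hm i), Fin.prod_const]

theorem ZMod.card_ker_powMonoidHom_units_two_mul {n : ℕ} (hn : Odd n) (d : ℕ) :
    Nat.card (powMonoidHom d : (ZMod (2 * n))ˣ →* _).ker =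
      Nat.card (powMonoidHom d : (ZMod n)ˣ →* _).ker :=
  ((Units.mapEquiv (ZMod.chineseRemainder hn.coprime_two_left).toMulEquiv).trans
    (MulEquiv.prodUnits.trans MulEquiv.uniqueProd)).card_ker_powMonoidHom_eq d

theorem Int.four_mul_dvd_sq_sub_one_iff {n z : ℤ} (hn : Odd n) (hz : Odd z) :
    4 * n ∣ z ^ 2 - 1 ↔ 2 * n ∣ z ^ 2 - 1 := by
  refine ⟨(mul_dvd_mul_right (by norm_num) n).trans, fun h => ?_⟩
  have h4 : 4 ∣ z ^ 2 - 1 := Int.ModEq.dvd (Int.sq_mod_four_eq_one_of_odd hz).symm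
  have hcop : IsCoprime (2 ^ 2 : ℤ) n := (Int.isCoprime_two_left.mpr hn).pow_left
  exact hcop.mul_dvd h4 ((dvd_mul_left n 2).trans h)

theorem ZMod.sq_eq_one_iff_four_mul_dvd {n : ℕ} (hn : Odd n) (u : (ZMod (2 * n))ˣ) :
    u ^ 2 = 1 ↔ 4 * (n : ℤ) ∣ ((u : ZMod (2 * n)).val : ℤ) ^ 2 - 1 := by
  have hodd : Odd (u : ZMod (2 * n)).val :=
    ((ZMod.val_coe_unit_coprime u).coprime_dvd_right (dvd_mul_right 2 n)).odd_of_right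
  rw [Int.four_mul_dvd_sq_sub_one_iff (by exact_mod_cast hn) (by exact_mod_cast hodd),
    ← Units.val_inj, ← sub_eq_zero]
  have hcast := ZMod.intCast_zmod_eq_zero_iff_dvd (((u : ZMod (2 * n)).val : ℤ) ^ 2 - 1) (2 * n)
  have : NeZero n := ⟨hn.pos.ne'⟩
  push_cast at hcast
  rw [Units.val_pow_eq_pow_val, Units.val_one, ← hcast, ZMod.natCast_zmod_val]

/-- For `n = p₁^{m₁} ⋯ p_k^{m_k}` a product of powers of `k` distinct odd primes,
the group `G = {u ∈ (ℤ/2n)ˣ : u² ≡ 1 mod 4n}` is isomorphic to `(ℤ/2)^k`, and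
`G/{±1}` is isomorphic to `(ℤ/2)^{k-1}`. -/
theorem units_square_one_mod_4n_iso
    (k : ℕ) (hk : 0 < k) (p m : Fin k → ℕ)
    (hp : ∀ i, (p i).Prime) (hodd : ∀ i, Odd (p i)) (hinj : Function.Injective p)
    (hm : ∀ i, 1 ≤ m i) (n : ℕ) (hn : n = ∏ i, p i ^ m i)
    (G : Subgroup (ZMod (2 * n))ˣ)
    (hG : ∀ u : (ZMod (2 * n))ˣ,
      u ∈ G ↔ (4 * (n : ℤ)) ∣ (((u : ZMod (2 * n)).val : ℤ) ^ 2 - 1))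
    (H : Subgroup G)
    (hH : ∀ x : G, x ∈ H ↔
      ((x : (ZMod (2 * n))ˣ) = 1 ∨ (x : (ZMod (2 * n))ˣ) = -1)) :
    Nonempty (G ≃* (Fin k → Multiplicative (ZMod 2))) ∧
    Nonempty ((G ⧸ H) ≃* (Fin (k - 1) → Multiplicative (ZMod 2))) := by
  have hn_odd : Odd n :=
    hn ▸ Finset.prod_induction _ Odd (fun _ _ => Odd.mul) odd_one fun i _ => (hodd i).pow
  have hn_one : 1 < n := by
    let i : Fin k := ⟨0, hk⟩
    calc 1 < p i ^ m i := Nat.one_lt_pow (by have := hm i; omega) (hp i).one_lt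
      _ ≤ n := hn ▸ Finset.single_le_prod' (fun j _ => Nat.one_le_pow _ _ (hp j).pos)
        (Finset.mem_univ i)
  obtain rfl : G = (powMonoidHom 2).ker :=
    Subgroup.ext fun u => (hG u).trans (ZMod.sq_eq_one_iff_four_mul_dvd hn_odd u).symm
  have hcard : Nat.card (powMonoidHom 2 : (ZMod (2 * n))ˣ →* _).ker = 2 ^ k := by
    rw [ZMod.card_ker_powMonoidHom_units_two_mul hn_odd, hn,
      ZMod.card_ker_powMonoidHom_two_units hp hodd hinj hm]
  have hexp (x : (powMonoidHom 2 : (ZMod (2 * n))ˣ →* _).ker) : x ^ 2 = 1 := Subtype.ext x.2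
  have hneg : (-1 : (ZMod (2 * n))ˣ) ∈ (powMonoidHom 2).ker := neg_one_sq
  have hneg_ne : (⟨-1, hneg⟩ : (powMonoidHom 2 : (ZMod (2 * n))ˣ →* _).ker) ≠ 1 := by
    have : Fact (2 < 2 * n) := ⟨by omega⟩
    simpa [Subtype.ext_iff, Units.ext_iff] using CharP.neg_one_ne_one (ZMod (2 * n)) (2 * n)
  have hH_card : Nat.card H = 2 :=
    H.card_eq_two_of_mem_iff hneg_ne fun x => by simp only [hH, Subtype.ext_iff]; rfl
  refine ⟨CommGroup.nonempty_mulEquiv_fin_fun_multiplicative_zmod_two hcard hexp, ?_⟩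
  rw [← Nat.sub_add_cancel hk] at hcard
  exact QuotientGroup.nonempty_mulEquiv_fin_fun_multiplicative_zmod_two hcard hexp H hH_card
end
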